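/- Let a, b, c, d : ℝ → ℝ be differentiable functions and let X be the vector field on ℝ⁴ given at the point (x,y,z,t) by X = a(t) e₁ + b(t) e₂ + c(t) e₃ + d(t) e₄. Then at every point, ∇̃_X X = a'(t) d(t) e₁ + d(t)(b'(t) − a(t)) e₂ + d(t)(c'(t) − b(t)) e₃ + [d(t) d'(t) + b(t)(a(t) + c(t))] e₄. -/

import Mathlib

noncomputable section

/-- The left-invariant frame fields e₁,e₂,e₃,e₄ on ℝ⁴ (coordinates x,y,z,t = p 0,...,p 3). -/
def eVF (i : Fin 4) (p : Fin 4 → ℝ) : Fin 4 → ℝ :=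
  ![![1, 0, 0, 0],
    ![p 3, 1, 0, 0],
    ![(p 3) ^ 2 / 2, p 3, 1, 0],
    ![0, 0, 0, 1]] i

/-- The matrix of the metric g̃ at a point with last coordinate t. -/
def gMat (t : ℝ) : Matrix (Fin 4) (Fin 4) ℝ :=
  !![1, -t, t ^ 2 / 2, 0;
     -t, 1 + t ^ 2, -t * (1 + t ^ 2 / 2), 0;
     t ^ 2 / 2, -t * (1 + t ^ 2 / 2), 1 + t ^ 2 + t ^ 4 / 4, 0;
     0, 0, 0, 1]

/-- The metric g̃ as a bilinear form on each tangent space. -/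
def gMet (p X Y : Fin 4 → ℝ) : ℝ :=
  ∑ i, ∑ j, gMat (p 3) i j * X i * Y j

/-- Partial derivative in direction of the i-th coordinate. -/
def pd (i : Fin 4) (f : (Fin 4 → ℝ) → ℝ) (p : Fin 4 → ℝ) : ℝ :=
  deriv (fun s => f (Function.update p i s)) (p i)

/-- The Christoffel symbols Γᵏᵢⱼ of g̃. -/
def Chr (p : Fin 4 → ℝ) (k i j : Fin 4) : ℝ :=
  (1 / 2) * ∑ l, (gMat (p 3))⁻¹ k l *
    (pd i (fun q => gMat (q 3) j l) p + pd j (fun q => gMat (q 3) i l) p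
      - pd l (fun q => gMat (q 3) i j) p)

/-- The Levi-Civita connection of g̃ in coordinates. -/
def nabla (X Y : (Fin 4 → ℝ) → (Fin 4 → ℝ)) (p : Fin 4 → ℝ) : Fin 4 → ℝ :=
  fun k => (∑ i, X p i * pd i (fun q => Y q k) p)
    + ∑ i, ∑ j, Chr p k i j * X p i * Y p j

/-- Lie bracket of vector fields on ℝ⁴. -/
def bracket (X Y : (Fin 4 → ℝ) → (Fin 4 → ℝ)) (p : Fin 4 → ℝ) : Fin 4 → ℝ :=
  fderiv ℝ Y p (X p) - fderiv ℝ X p (Y p)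

/-- The curvature tensor R̃(X,Y)Z = ∇̃_X ∇̃_Y Z − ∇̃_Y ∇̃_X Z − ∇̃_{[X,Y]} Z. -/
def Riem (X Y Z : (Fin 4 → ℝ) → (Fin 4 → ℝ)) (p : Fin 4 → ℝ) : Fin 4 → ℝ :=
  nabla X (nabla Y Z) p - nabla Y (nabla X Z) p - nabla (bracket X Y) Z p

/-! The metric, the frame and the field `X` depend on `t = p 3` only, so in coordinates
`X = F(t)` with `F(t) = E(t) (a, b, c, d)`, `E` the frame matrix, and
`∇̃_X X = d · F'(t) + Γ(F, F)`. Differentiating the frame (`e₂' = e₁`, `e₃' = e₂`) gives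
`F' = E (a' + b, b' + c, c', d')`, and the Christoffel term, computed from the explicit inverse
of `g̃`, is `-bd e₁ - (a + c)d e₂ - bd e₃ + b(a + c) e₄`. -/

def gMatInv (t : ℝ) : Matrix (Fin 4) (Fin 4) ℝ :=
  !![1 + t ^ 2 + t ^ 4 / 4, t + t ^ 3 / 2, t ^ 2 / 2, 0;
     t + t ^ 3 / 2, 1 + t ^ 2, t, 0;
     t ^ 2 / 2, t, 1, 0;
     0, 0, 0, 1]

def gMatDeriv (t : ℝ) : Matrix (Fin 4) (Fin 4) ℝ :=
  !![0, -1, t, 0;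
     -1, 2 * t, -1 - 3 * t ^ 2 / 2, 0;
     t, -1 - 3 * t ^ 2 / 2, 2 * t + t ^ 3, 0;
     0, 0, 0, 0]

def frameCoords (a b c d t : ℝ) : Fin 4 → ℝ :=
  ![a + b * t + c * (t ^ 2 / 2), b + c * t, c, d]

lemma inv_gMat (t : ℝ) : (gMat t)⁻¹ = gMatInv t := by
  refine Matrix.inv_eq_right_inv ?_
  ext i j
  fin_cases i <;> fin_cases j <;>
    simp [gMat, gMatInv, Matrix.mul_apply, Fin.sum_univ_four] <;> ring

lemma deriv_gMat_apply (i j : Fin 4) (t : ℝ) :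
    deriv (fun s => gMat s i j) t = gMatDeriv t i j := by
  fin_cases i <;> fin_cases j <;>
    simp (disch := fun_prop) [gMat, gMatDeriv, deriv_fun_add, deriv_fun_mul] <;> ring

lemma pd_comp_apply (i j : Fin 4) (g : ℝ → ℝ) (p : Fin 4 → ℝ) :
    pd i (fun q => g (q j)) p = if i = j then deriv g (p j) else 0 := by
  unfold pd
  split_ifs with h
  · subst h
    simp
  · simp [Function.update_of_ne (Ne.symm h)]

lemma smul_eVF_add_eq_frameCoords (a b c d : ℝ) (q : Fin 4 → ℝ) :
    a • eVF 0 q + b • eVF 1 q + c • eVF 2 q + d • eVF 3 q = frameCoords a b c d (q 3) := by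
  ext k
  fin_cases k <;> simp [eVF, frameCoords]

lemma Chr_eq_sum_gMatInv_mul (p : Fin 4 → ℝ) (k i j : Fin 4) : Chr p k i j =
    (1 / 2) * ∑ l, gMatInv (p 3) k l *
      ((if i = 3 then gMatDeriv (p 3) j l else 0) + (if j = 3 then gMatDeriv (p 3) i l else 0)
        - (if l = 3 then gMatDeriv (p 3) i j else 0)) := by
  simp only [Chr, inv_gMat, fun i j l => pd_comp_apply i 3 (fun t => gMat t j l) p,
    deriv_gMat_apply]

lemma deriv_frameCoords_apply {a b c d : ℝ → ℝ} {t : ℝ} (ha : DifferentiableAt ℝ a t)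
    (hb : DifferentiableAt ℝ b t) (hc : DifferentiableAt ℝ c t) (k : Fin 4) :
    deriv (fun s => frameCoords (a s) (b s) (c s) (d s) s k) t
      = frameCoords (deriv a t + b t) (deriv b t + c t) (deriv c t) (deriv d t) t k := by
  fin_cases k <;>
    simp (disch := fun_prop) [frameCoords, deriv_fun_add, deriv_fun_mul] <;> ring

lemma nabla_comp_apply (X : (Fin 4 → ℝ) → Fin 4 → ℝ) (F : ℝ → Fin 4 → ℝ)
    (p : Fin 4 → ℝ) (k : Fin 4) :
    nabla X (fun q => F (q 3)) p k
      = X p 3 * deriv (fun t => F t k) (p 3) + ∑ i, ∑ j, Chr p k i j * X p i * F (p 3) j := by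
  simp [nabla, pd_comp_apply (g := fun t => F t k)]

lemma sum_Chr_mul_frameCoords (p : Fin 4 → ℝ) (a b c d : ℝ) (k : Fin 4) :
    ∑ i, ∑ j, Chr p k i j * frameCoords a b c d (p 3) i * frameCoords a b c d (p 3) j
      = frameCoords (-(b * d)) (-((a + c) * d)) (-(b * d)) (b * (a + c)) (p 3) k := by
  simp only [Chr_eq_sum_gMatInv_mul, Fin.sum_univ_four]
  fin_cases k <;> simp [gMatInv, gMatDeriv, frameCoords] <;> ring

theorem nil4_nabla_XX_general (a b c d : ℝ → ℝ)
    (ha : Differentiable ℝ a) (hb : Differentiable ℝ b)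
    (hc : Differentiable ℝ c) :
    ∀ p : Fin 4 → ℝ,
      nabla
        (fun q => a (q 3) • eVF 0 q + b (q 3) • eVF 1 q
          + c (q 3) • eVF 2 q + d (q 3) • eVF 3 q)
        (fun q => a (q 3) • eVF 0 q + b (q 3) • eVF 1 q
          + c (q 3) • eVF 2 q + d (q 3) • eVF 3 q) p
      = (deriv a (p 3) * d (p 3)) • eVF 0 p
        + (d (p 3) * (deriv b (p 3) - a (p 3))) • eVF 1 p
        + (d (p 3) * (deriv c (p 3) - b (p 3))) • eVF 2 p
        + (d (p 3) * deriv d (p 3) + b (p 3) * (a (p 3) + c (p 3))) • eVF 3 p := by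
  intro p
  simp only [smul_eVF_add_eq_frameCoords]
  ext k
  rw [nabla_comp_apply _ (fun t => frameCoords (a t) (b t) (c t) (d t) t),
    deriv_frameCoords_apply (ha _) (hb _) (hc _), sum_Chr_mul_frameCoords]
  fin_cases k <;> simp [frameCoords] <;> ring

/-- For X = a(t)e₁ + b(t)e₂ + c(t)e₃ + d(t)e₄,
∇̃_X X = a'd e₁ + d(b'−a) e₂ + d(c'−b) e₃ + [dd' + b(a+c)] e₄. -/
theorem nil4_nabla_XX (a b c d : ℝ → ℝ)
    (ha : Differentiable ℝ a) (hb : Differentiable ℝ b)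
    (hc : Differentiable ℝ c) (hd : Differentiable ℝ d) :
    ∀ p : Fin 4 → ℝ,
      nabla
        (fun q => a (q 3) • eVF 0 q + b (q 3) • eVF 1 q
          + c (q 3) • eVF 2 q + d (q 3) • eVF 3 q)
        (fun q => a (q 3) • eVF 0 q + b (q 3) • eVF 1 q
          + c (q 3) • eVF 2 q + d (q 3) • eVF 3 q) p
      = (deriv a (p 3) * d (p 3)) • eVF 0 p
        + (d (p 3) * (deriv b (p 3) - a (p 3))) • eVF 1 p
        + (d (p 3) * (deriv c (p 3) - b (p 3))) • eVF 2 p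
        + (d (p 3) * deriv d (p 3) + b (p 3) * (a (p 3) + c (p 3))) • eVF 3 p :=
  nil4_nabla_XX_general a b c d ha hb hc
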